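/- arXiv:1207.6659 — 4 statements merged into one kernel-verified Lean document; each statement's English description precedes it below -/
import Mathlib

section
/- The two-dimensional product rule: if R = R₁ × R₂ and R' = R₁' × R₂' are dyadic rectangles in [0,1)² with |R| = |R'|, R ≠ R', and R ∩ R' ≠ ∅, then |R₁| ≠ |R₁'| and |R₂| ≠ |R₂'|, and h_R · h_{R'} = ± h_{R ∩ R'}, where R ∩ R' is again a dyadic rectangle. -/
open MeasureTheory Finset

noncomputable section

/-- The dyadic interval `[k/2^m, (k+1)/2^m)`. -/
def dyadI (m k : ℕ) : Set ℝ := Set.Ico ((k : ℝ) / 2 ^ m) (((k : ℝ) + 1) / 2 ^ m)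

/-- The `L^∞`-normalized Haar function of the dyadic interval `dyadI m k`:
`-1` on the left half, `+1` on the right half, `0` elsewhere. -/
def haar (m k : ℕ) : ℝ → ℝ :=
  (dyadI (m + 1) (2 * k + 1)).indicator (fun _ => (1 : ℝ))
    - (dyadI (m + 1) (2 * k)).indicator (fun _ => (1 : ℝ))

/-- The Haar function of the dyadic box with side lengths `2^{-r i}` and positions `k i`. -/
def haarBox {d : ℕ} (r k : Fin d → ℕ) : (Fin d → ℝ) → ℝ :=
  fun x => ∏ i, haar (r i) (k i) (x i)

/-- The unit cube `[0,1)^d`. -/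
def unitCube (d : ℕ) : Set (Fin d → ℝ) := Set.univ.pi fun _ => Set.Ico (0 : ℝ) 1

/-- Index set for positions of dyadic boxes of level vector `r`. -/
def boxIdx (d : ℕ) (r : Fin d → ℕ) : Finset (Fin d → ℕ) :=
  Fintype.piFinset fun i => Finset.range (2 ^ r i)

/-- The level vectors `r ∈ ℕ^d` with `|r| = r₁ + ⋯ + r_d = n`. -/
def levIdx (d n : ℕ) : Finset (Fin d → ℕ) :=
  (Fintype.piFinset fun _ : Fin d => Finset.range (n + 1)).filter fun r => ∑ i, r i = n

/-! Two dyadic intervals that meet are nested, since the position of `x` at level `m` is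
`⌊x 2^m⌋`. If `R ≠ R'` meet and have equal area, the levels differ in both coordinates and in
opposite directions, so `R ∩ R' = R₁' × R₂` (say). In each coordinate the finer interval lies in
one half of the coarser one, where the coarser Haar function is the constant `±1`. -/

lemma nonneg_of_mem_dyadI {m k : ℕ} {x : ℝ} (h : x ∈ dyadI m k) : 0 ≤ x :=
  le_trans (by positivity) h.1

lemma mem_dyadI_iff_floor {m k : ℕ} {x : ℝ} (hx : 0 ≤ x) :
    x ∈ dyadI m k ↔ ⌊x * 2 ^ m⌋₊ = k := by
  have h2 : (0 : ℝ) < 2 ^ m := by positivity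
  rw [dyadI, Set.mem_Ico, Nat.floor_eq_iff (by positivity), div_le_iff₀ h2, lt_div_iff₀ h2]

lemma dyadI_nonempty (m k : ℕ) : (dyadI m k).Nonempty :=
  Set.nonempty_Ico.mpr (by gcongr; linarith)

lemma floor_mul_two_pow_of_mem_dyadI {m d k : ℕ} {x : ℝ} (h : x ∈ dyadI (m + d) k) :
    ⌊x * 2 ^ m⌋₊ = k / 2 ^ d := by
  have hk : ⌊x * 2 ^ (m + d)⌋₊ = k := (mem_dyadI_iff_floor (nonneg_of_mem_dyadI h)).mp h
  have hx : x * 2 ^ m = x * 2 ^ (m + d) / (2 ^ d : ℕ) := by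
    push_cast; field_simp; ring
  rw [hx, Nat.floor_div_natCast, hk]

lemma eq_of_mem_dyadI_of_mem_dyadI {m k k' : ℕ} {x : ℝ} (h : x ∈ dyadI m k)
    (h' : x ∈ dyadI m k') : k = k' := by
  have hx := nonneg_of_mem_dyadI h
  rw [← (mem_dyadI_iff_floor hx).mp h, (mem_dyadI_iff_floor hx).mp h']

lemma dyadI_subset_of_le_of_inter_nonempty {m m' k k' : ℕ} (hle : m ≤ m')
    (h : (dyadI m k ∩ dyadI m' k').Nonempty) : dyadI m' k' ⊆ dyadI m k := by
  obtain ⟨d, rfl⟩ := Nat.exists_eq_add_of_le hle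
  obtain ⟨x, hx, hx'⟩ := h
  have hk : k = k' / 2 ^ d := by
    rw [← (mem_dyadI_iff_floor (nonneg_of_mem_dyadI hx)).mp hx,
      floor_mul_two_pow_of_mem_dyadI hx']
  intro y hy
  rw [mem_dyadI_iff_floor (nonneg_of_mem_dyadI hy), floor_mul_two_pow_of_mem_dyadI hy, hk]

lemma dyadI_succ_subset {m j : ℕ} : dyadI (m + 1) j ⊆ dyadI m (j / 2) := by
  intro y hy
  rw [mem_dyadI_iff_floor (nonneg_of_mem_dyadI hy),
    floor_mul_two_pow_of_mem_dyadI (d := 1) hy, pow_one]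

lemma mem_dyadI_succ_of_mem {m k : ℕ} {x : ℝ} (h : x ∈ dyadI m k) :
    x ∈ dyadI (m + 1) (2 * k) ∨ x ∈ dyadI (m + 1) (2 * k + 1) := by
  have hx := nonneg_of_mem_dyadI h
  set j := ⌊x * 2 ^ (m + 1)⌋₊
  have hxj : x ∈ dyadI (m + 1) j := (mem_dyadI_iff_floor hx).mpr rfl
  have hj : j / 2 = k := eq_of_mem_dyadI_of_mem_dyadI (dyadI_succ_subset hxj) h
  rcases (by omega : j = 2 * k ∨ j = 2 * k + 1) with hk | hk
  · exact .inl ((mem_dyadI_iff_floor hx).mpr hk)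
  · exact .inr ((mem_dyadI_iff_floor hx).mpr hk)

lemma haar_eq_neg_one {m k : ℕ} {x : ℝ} (h : x ∈ dyadI (m + 1) (2 * k)) : haar m k x = -1 := by
  have hn : x ∉ dyadI (m + 1) (2 * k + 1) := fun h' => by
    have := eq_of_mem_dyadI_of_mem_dyadI h h'; omega
  simp [haar, Set.indicator_of_mem h, Set.indicator_of_notMem hn]

lemma haar_eq_one {m k : ℕ} {x : ℝ} (h : x ∈ dyadI (m + 1) (2 * k + 1)) : haar m k x = 1 := by
  have hn : x ∉ dyadI (m + 1) (2 * k) := fun h' => by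
    have := eq_of_mem_dyadI_of_mem_dyadI h h'; omega
  simp [haar, Set.indicator_of_mem h, Set.indicator_of_notMem hn]

lemma haar_eq_zero {m k : ℕ} {x : ℝ} (h : x ∉ dyadI m k) : haar m k x = 0 := by
  have hl : x ∉ dyadI (m + 1) (2 * k) := fun h' => h (by simpa using dyadI_succ_subset h')
  have hr : x ∉ dyadI (m + 1) (2 * k + 1) := fun h' => h (by
    simpa [show (2 * k + 1) / 2 = k by omega] using dyadI_succ_subset h')
  simp [haar, Set.indicator_of_notMem hl, Set.indicator_of_notMem hr]

lemma haar_mul_haar_of_lt {m m' k k' : ℕ} (hlt : m < m') (hsub : dyadI m' k' ⊆ dyadI m k) :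
    ∃ ε : ℝ, (ε = 1 ∨ ε = -1) ∧ ∀ x, haar m k x * haar m' k' x = ε * haar m' k' x := by
  obtain ⟨y, hy⟩ := dyadI_nonempty m' k'
  have hsub_half {j : ℕ} (hj : y ∈ dyadI (m + 1) j) : dyadI m' k' ⊆ dyadI (m + 1) j :=
    dyadI_subset_of_le_of_inter_nonempty hlt ⟨y, hj, hy⟩
  rcases mem_dyadI_succ_of_mem (hsub hy) with hleft | hright
  · refine ⟨-1, .inr rfl, fun x => ?_⟩
    by_cases hx : x ∈ dyadI m' k'
    · rw [haar_eq_neg_one (hsub_half hleft hx)]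
    · rw [haar_eq_zero hx, mul_zero, mul_zero]
  · refine ⟨1, .inl rfl, fun x => ?_⟩
    by_cases hx : x ∈ dyadI m' k'
    · rw [haar_eq_one (hsub_half hright hx)]
    · rw [haar_eq_zero hx, mul_zero, mul_zero]

lemma prod_inter_prod_eq_and_haar_mul_of_lt_of_lt {m1 k1 m2 k2 m1' k1' m2' k2' : ℕ}
    (hlt1 : m1 < m1') (hlt2 : m2' < m2)
    (hint1 : (dyadI m1 k1 ∩ dyadI m1' k1').Nonempty)
    (hint2 : (dyadI m2' k2' ∩ dyadI m2 k2).Nonempty) :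
    (dyadI m1 k1 ×ˢ dyadI m2 k2) ∩ (dyadI m1' k1' ×ˢ dyadI m2' k2')
        = dyadI m1' k1' ×ˢ dyadI m2 k2 ∧
      ∃ ε : ℝ, (ε = 1 ∨ ε = -1) ∧
        ∀ x : ℝ × ℝ, (haar m1 k1 x.1 * haar m2 k2 x.2) * (haar m1' k1' x.1 * haar m2' k2' x.2)
          = ε * (haar m1' k1' x.1 * haar m2 k2 x.2) := by
  have hsub1 := dyadI_subset_of_le_of_inter_nonempty hlt1.le hint1
  have hsub2 := dyadI_subset_of_le_of_inter_nonempty hlt2.le hint2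
  obtain ⟨ε1, hε1, hmul1⟩ := haar_mul_haar_of_lt hlt1 hsub1
  obtain ⟨ε2, hε2, hmul2⟩ := haar_mul_haar_of_lt hlt2 hsub2
  refine ⟨?_, ε1 * ε2, ?_, fun x => ?_⟩
  · rw [Set.prod_inter_prod, Set.inter_eq_self_of_subset_right hsub1,
      Set.inter_eq_self_of_subset_left hsub2]
  · rcases hε1 with rfl | rfl <;> rcases hε2 with rfl | rfl <;> norm_num
  · linear_combination (haar m2 k2 x.2 * haar m2' k2' x.2) * hmul1 x.1 +
      (ε1 * haar m1' k1' x.1) * hmul2 x.2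

/-- The two-dimensional product rule: if `R = R₁ × R₂` and `R' = R₁' × R₂'` are dyadic
rectangles in `[0,1)²` of the same area which are distinct and not disjoint, then
`|R₁| ≠ |R₁'|`, `|R₂| ≠ |R₂'|`, the intersection `R ∩ R'` is a dyadic rectangle, and
`h_R · h_{R'} = ± h_{R ∩ R'}`. -/
theorem stmt_2 (m1 k1 m2 k2 m1' k1' m2' k2' : ℕ)
    (h1 : k1 < 2 ^ m1) (h2 : k2 < 2 ^ m2) (h1' : k1' < 2 ^ m1') (h2' : k2' < 2 ^ m2')
    (hvol : m1 + m2 = m1' + m2')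
    (hne : dyadI m1 k1 ×ˢ dyadI m2 k2 ≠ dyadI m1' k1' ×ˢ dyadI m2' k2')
    (hint : ((dyadI m1 k1 ×ˢ dyadI m2 k2) ∩ (dyadI m1' k1' ×ˢ dyadI m2' k2')).Nonempty) :
    m1 ≠ m1' ∧ m2 ≠ m2' ∧
    ∃ n1 j1 n2 j2 : ℕ, j1 < 2 ^ n1 ∧ j2 < 2 ^ n2 ∧
      (dyadI m1 k1 ×ˢ dyadI m2 k2) ∩ (dyadI m1' k1' ×ˢ dyadI m2' k2')
        = dyadI n1 j1 ×ˢ dyadI n2 j2 ∧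
      ∃ ε : ℝ, (ε = 1 ∨ ε = -1) ∧
        ∀ x : ℝ × ℝ, (haar m1 k1 x.1 * haar m2 k2 x.2) * (haar m1' k1' x.1 * haar m2' k2' x.2)
          = ε * (haar n1 j1 x.1 * haar n2 j2 x.2) := by
  obtain ⟨⟨x1, x2⟩, ⟨hx1, hx2⟩, hx1', hx2'⟩ := hint
  have hm1 : m1 ≠ m1' := by
    rintro rfl
    obtain rfl : m2 = m2' := by omega
    obtain rfl := eq_of_mem_dyadI_of_mem_dyadI hx1 hx1'
    obtain rfl := eq_of_mem_dyadI_of_mem_dyadI hx2 hx2'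
    exact hne rfl
  refine ⟨hm1, by omega, ?_⟩
  rcases hm1.lt_or_gt with hlt | hgt
  · obtain ⟨hR, ε, hε, hmul⟩ :=
      prod_inter_prod_eq_and_haar_mul_of_lt_of_lt hlt (by omega) ⟨x1, hx1, hx1'⟩ ⟨x2, hx2', hx2⟩
    exact ⟨_, _, _, _, h1', h2, hR, ε, hε, hmul⟩
  · obtain ⟨hR, ε, hε, hmul⟩ :=
      prod_inter_prod_eq_and_haar_mul_of_lt_of_lt hgt (by omega) ⟨x1, hx1', hx1⟩ ⟨x2, hx2, hx2'⟩
    exact ⟨_, _, _, _, h1, h2', by rwa [Set.inter_comm], ε, hε,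
      fun x => by rw [mul_comm]; exact hmul x⟩
end
end

section
/- Roth's orthogonality estimate: for the dual function F = Σ_{r ∈ ℕ^d, |r| = n} f_r, where each f_r is an r-function, one has ‖F‖₂² = #{r ∈ ℕ^d : |r| = n} = C(n+d-1, d-1); in particular ‖F‖₂ ≲_d n^{(d-1)/2}. -/
/-! Distinct Haar boxes are orthogonal in `L²`: they differ in some coordinate, where the two
one-dimensional Haar functions are either disjointly supported (same level) or one is constant
on the support of the other. So `‖F‖₂²` is the sum of the squared norms of its terms; the
`2 ^ |r|` boxes of level `r` have measure `2 ^ (-|r|)` each, so every `r`-function contributes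
exactly `1`. Stars and bars counts the levels, and `C(n+d-1, d-1) ≤ (d n) ^ (d-1)` gives the
growth rate. -/

open MeasureTheory Finset

noncomputable section

lemma integral_sq_sum_of_orthogonal {α ι : Type*} [MeasurableSpace α] {μ : Measure α}
    (s : Finset ι) (g : ι → α → ℝ)
    (hint : ∀ i ∈ s, ∀ j ∈ s, Integrable (fun x => g i x * g j x) μ)
    (horth : ∀ i ∈ s, ∀ j ∈ s, i ≠ j → ∫ x, g i x * g j x ∂μ = 0) :
    ∫ x, (∑ i ∈ s, g i x) ^ 2 ∂μ = ∑ i ∈ s, ∫ x, g i x * g i x ∂μ := by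
  simp_rw [sq, sum_mul_sum]
  rw [integral_finsetSum _ fun i hi => integrable_finsetSum _ fun j hj => hint i hi j hj]
  refine sum_congr rfl fun i hi => ?_
  rw [integral_finsetSum _ fun j hj => hint i hi j hj]
  exact sum_eq_single_of_mem i hi fun j hj hji => horth i hi j hj hji.symm

lemma mem_dyadI_iff {m k : ℕ} {x : ℝ} : x ∈ dyadI m k ↔ ⌊2 ^ m * x⌋ = k := by
  have h2m : (0 : ℝ) < 2 ^ m := by positivity
  rw [Int.floor_eq_iff, dyadI, Set.mem_Ico, div_le_iff₀' h2m, lt_div_iff₀' h2m]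
  push_cast
  rfl

lemma dyadI_disjoint {m k k' : ℕ} (h : k ≠ k') : Disjoint (dyadI m k) (dyadI m k') :=
  Set.disjoint_left.2 fun x hx hx' => h <| by
    rw [mem_dyadI_iff] at hx hx'
    exact_mod_cast hx.symm.trans hx'

lemma dyadI_subset_dyadI (m t k : ℕ) : dyadI (m + t) k ⊆ dyadI m (k / 2 ^ t) := by
  intro x hx
  rw [mem_dyadI_iff] at hx ⊢
  have h : (2 : ℝ) ^ m * x = 2 ^ (m + t) * x / ((2 ^ t : ℕ) : ℝ) := by
    push_cast
    field_simp
    ring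
  rw [h, Int.floor_div_natCast, hx, Int.natCast_div]

lemma dyadI_succ_subset_dyadI {m k j : ℕ} (hj : j / 2 = k) : dyadI (m + 1) j ⊆ dyadI m k :=
  hj ▸ dyadI_subset_dyadI m 1 j

lemma dyadI_subset_Ico {m k : ℕ} (hk : k < 2 ^ m) : dyadI m k ⊆ Set.Ico 0 1 := by
  have h := dyadI_subset_dyadI 0 m k
  rw [zero_add, Nat.div_eq_of_lt hk] at h
  simpa [dyadI] using h

lemma measurableSet_dyadI (m k : ℕ) : MeasurableSet (dyadI m k) := measurableSet_Ico

lemma volume_dyadI (m k : ℕ) : volume (dyadI m k) = ENNReal.ofReal (1 / 2 ^ m) := by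
  rw [dyadI, Real.volume_Ico]
  congr 1
  ring

lemma integrable_indicator_dyadI (m k : ℕ) :
    Integrable ((dyadI m k).indicator fun _ => (1 : ℝ)) :=
  (integrable_indicator_iff (measurableSet_dyadI m k)).2 <|
    integrableOn_const (volume_dyadI m k ▸ ENNReal.ofReal_ne_top)

lemma integral_indicator_dyadI (m k : ℕ) :
    ∫ x, (dyadI m k).indicator (fun _ => (1 : ℝ)) x = 1 / 2 ^ m := by
  rw [integral_indicator (measurableSet_dyadI m k), setIntegral_const, measureReal_def,
    volume_dyadI, ENNReal.toReal_ofReal (by positivity), smul_eq_mul, mul_one]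

lemma haar_eq_zero_of_notMem {m k : ℕ} {x : ℝ} (hx : x ∉ dyadI m k) : haar m k x = 0 := by
  have h₁ : x ∉ dyadI (m + 1) (2 * k + 1) := fun h => hx (dyadI_succ_subset_dyadI (by omega) h)
  have h₀ : x ∉ dyadI (m + 1) (2 * k) := fun h => hx (dyadI_succ_subset_dyadI (by omega) h)
  simp [haar, h₀, h₁]

lemma haar_mul_haar_of_ne {m k k' : ℕ} (h : k ≠ k') (x : ℝ) :
    haar m k x * haar m k' x = 0 := by
  by_cases hx : x ∈ dyadI m k
  · rw [haar_eq_zero_of_notMem (Set.disjoint_left.1 (dyadI_disjoint h) hx), mul_zero]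
  · rw [haar_eq_zero_of_notMem hx, zero_mul]

lemma haar_mul_self (m k : ℕ) (x : ℝ) :
    haar m k x * haar m k x = (dyadI (m + 1) (2 * k + 1)).indicator (fun _ => 1) x
      + (dyadI (m + 1) (2 * k)).indicator (fun _ => 1) x := by
  have hdisj : Disjoint (dyadI (m + 1) (2 * k + 1)) (dyadI (m + 1) (2 * k)) :=
    dyadI_disjoint (by omega)
  by_cases h₁ : x ∈ dyadI (m + 1) (2 * k + 1)
  · simp [haar, h₁, Set.disjoint_left.1 hdisj h₁]
  · by_cases h₀ : x ∈ dyadI (m + 1) (2 * k) <;> simp [haar, h₀, h₁]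

lemma haar_eq_const_on_dyadI_succ (m k j : ℕ) :
    ∃ c : ℝ, ∀ x ∈ dyadI (m + 1) j, haar m k x = c := by
  classical
  refine ⟨(if j = 2 * k + 1 then 1 else 0) - (if j = 2 * k then 1 else 0), fun x hx => ?_⟩
  have hmem : ∀ j', x ∈ dyadI (m + 1) j' ↔ j = j' := fun j' =>
    ⟨fun h => by_contra fun hne => Set.disjoint_left.1 (dyadI_disjoint hne) hx h,
      fun h => h ▸ hx⟩
  simp only [haar, Pi.sub_apply, Set.indicator_apply, hmem]

lemma abs_haar_le_one (m k : ℕ) (x : ℝ) : |haar m k x| ≤ 1 := by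
  by_cases h₁ : x ∈ dyadI (m + 1) (2 * k + 1)
  · have h₀ : x ∉ dyadI (m + 1) (2 * k) := Set.disjoint_left.1 (dyadI_disjoint (by omega)) h₁
    simp [haar, h₀, h₁]
  · by_cases h₀ : x ∈ dyadI (m + 1) (2 * k) <;> simp [haar, h₀, h₁]

lemma integrable_haar (m k : ℕ) : Integrable (haar m k) :=
  (integrable_indicator_dyadI _ _).sub (integrable_indicator_dyadI _ _)

lemma integral_haar (m k : ℕ) : ∫ x, haar m k x = 0 := by
  rw [haar, integral_sub' (integrable_indicator_dyadI _ _) (integrable_indicator_dyadI _ _),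
    integral_indicator_dyadI, integral_indicator_dyadI, sub_self]

lemma integral_haar_mul_self (m k : ℕ) : ∫ x, haar m k x * haar m k x = 1 / 2 ^ m := by
  simp_rw [haar_mul_self]
  rw [integral_add (integrable_indicator_dyadI _ _) (integrable_indicator_dyadI _ _),
    integral_indicator_dyadI, integral_indicator_dyadI, pow_succ]
  ring

lemma integral_haar_mul_of_lt {m m' : ℕ} (k k' : ℕ) (h : m < m') :
    ∫ x, haar m k x * haar m' k' x = 0 := by
  obtain ⟨t, rfl⟩ := Nat.exists_eq_add_of_lt h
  obtain ⟨c, hc⟩ := haar_eq_const_on_dyadI_succ m k (k' / 2 ^ t)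
  have hmul : ∀ x, haar m k x * haar (m + t + 1) k' x = c * haar (m + t + 1) k' x := by
    intro x
    by_cases hx : x ∈ dyadI (m + t + 1) k'
    · rw [hc x (dyadI_subset_dyadI (m + 1) t k' (by rwa [add_right_comm]))]
    · rw [haar_eq_zero_of_notMem hx, mul_zero, mul_zero]
  simp_rw [hmul]
  rw [integral_const_mul, integral_haar, mul_zero]

lemma integral_haar_mul_of_ne {m k m' k' : ℕ} (h : m ≠ m' ∨ k ≠ k') :
    ∫ x, haar m k x * haar m' k' x = 0 := by
  rcases lt_trichotomy m m' with hlt | rfl | hgt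
  · exact integral_haar_mul_of_lt k k' hlt
  · simp_rw [haar_mul_haar_of_ne (h.resolve_left (not_not_intro rfl)), integral_zero]
  · simp_rw [mul_comm (haar m k _)]
    exact integral_haar_mul_of_lt k' k hgt

lemma integrable_haar_mul_haar (m k m' k' : ℕ) :
    Integrable fun x => haar m k x * haar m' k' x :=
  (integrable_haar m' k').bdd_mul (integrable_haar m k).aestronglyMeasurable
    (Filter.Eventually.of_forall (abs_haar_le_one m k))

section HaarBox

variable {d : ℕ}

lemma haarBox_mul_haarBox (r k r' k' : Fin d → ℕ) (x : Fin d → ℝ) :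
    haarBox r k x * haarBox r' k' x = ∏ i, haar (r i) (k i) (x i) * haar (r' i) (k' i) (x i) :=
  (prod_mul_distrib).symm

lemma integrable_haarBox_mul (r k r' k' : Fin d → ℕ) :
    Integrable fun x => haarBox r k x * haarBox r' k' x := by
  simp_rw [haarBox_mul_haarBox]
  exact Integrable.fintype_prod fun i => integrable_haar_mul_haar (r i) (k i) (r' i) (k' i)

lemma integral_haarBox_mul (r k r' k' : Fin d → ℕ) :
    ∫ x, haarBox r k x * haarBox r' k' x
      = ∏ i, ∫ t, haar (r i) (k i) t * haar (r' i) (k' i) t := by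
  simp_rw [haarBox_mul_haarBox]
  exact integral_fintype_prod_eq_prod fun i t => haar (r i) (k i) t * haar (r' i) (k' i) t

lemma integral_haarBox_mul_self (r k : Fin d → ℕ) :
    ∫ x, haarBox r k x * haarBox r k x = 1 / 2 ^ ∑ i, r i := by
  simp_rw [integral_haarBox_mul, integral_haar_mul_self, one_div, ← prod_pow_eq_pow_sum,
    prod_inv_distrib]

lemma integral_haarBox_mul_of_ne {r k r' k' : Fin d → ℕ} (h : r ≠ r' ∨ k ≠ k') :
    ∫ x, haarBox r k x * haarBox r' k' x = 0 := by
  obtain ⟨i, hi⟩ : ∃ i, r i ≠ r' i ∨ k i ≠ k' i := by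
    rcases h with h | h
    · obtain ⟨i, hi⟩ := Function.ne_iff.1 h
      exact ⟨i, Or.inl hi⟩
    · obtain ⟨i, hi⟩ := Function.ne_iff.1 h
      exact ⟨i, Or.inr hi⟩
  rw [integral_haarBox_mul]
  exact prod_eq_zero (mem_univ i) (integral_haar_mul_of_ne hi)

lemma haarBox_eq_zero_of_notMem_unitCube {r k : Fin d → ℕ} (hk : k ∈ boxIdx d r)
    {x : Fin d → ℝ} (hx : x ∉ unitCube d) : haarBox r k x = 0 := by
  simp only [unitCube, Set.mem_univ_pi, not_forall] at hx
  obtain ⟨i, hi⟩ := hx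
  refine prod_eq_zero (mem_univ i) (haar_eq_zero_of_notMem fun hmem => hi ?_)
  exact dyadI_subset_Ico (mem_range.1 (Fintype.mem_piFinset.1 hk i)) hmem

lemma card_boxIdx (r : Fin d → ℕ) : #(boxIdx d r) = 2 ^ ∑ i, r i := by
  simp [boxIdx, prod_pow_eq_pow_sum]

lemma mem_levIdx {n : ℕ} {r : Fin d → ℕ} : r ∈ levIdx d n ↔ ∑ i, r i = n := by
  refine mem_filter.trans ⟨And.right, fun h => ⟨Fintype.mem_piFinset.2 fun i => ?_, h⟩⟩
  exact mem_range_succ_iff.2 (h ▸ single_le_sum (fun _ _ => Nat.zero_le _) (mem_univ i))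

lemma card_levIdx (hd : 1 ≤ d) (n : ℕ) : #(levIdx d n) = (n + d - 1).choose (d - 1) := by
  calc #(levIdx d n) = Nat.card {r : Fin d → ℕ // ∑ i, r i = n} := by
        rw [← Nat.card_eq_finsetCard]
        exact Nat.card_congr (Equiv.subtypeEquivRight fun r => mem_levIdx)
    _ = Fintype.card (Sym (Fin d) n) := by
        rw [← Nat.card_eq_fintype_card, Nat.card_congr (Sym.equivNatSumOfFintype (Fin d) n)]
    _ = (n + d - 1).choose (d - 1) := by
        rw [Sym.card_sym_eq_choose, Fintype.card_fin, add_comm, Nat.choose_symm_of_eq_add]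
        omega

end HaarBox

lemma integral_sq_sum_signed_haarBox {d : ℕ} (R : Finset (Fin d → ℕ))
    (ε : (Fin d → ℕ) → (Fin d → ℕ) → ℝ)
    (hε : ∀ r ∈ R, ∀ k ∈ boxIdx d r, ε r k = 1 ∨ ε r k = -1) :
    ∫ x, (∑ r ∈ R, ∑ k ∈ boxIdx d r, ε r k * haarBox r k x) ^ 2 = #R := by
  set g : (Σ _ : Fin d → ℕ, Fin d → ℕ) → (Fin d → ℝ) → ℝ :=
    fun p x => ε p.1 p.2 * haarBox p.1 p.2 x
  have hg : ∀ p q x,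
      g p x * g q x = ε p.1 p.2 * ε q.1 q.2 * (haarBox p.1 p.2 x * haarBox q.1 q.2 x) :=
    fun _ _ _ => mul_mul_mul_comm _ _ _ _
  have hint : ∀ p q, Integrable fun x => g p x * g q x := fun p q => by
    simp_rw [hg]
    exact (integrable_haarBox_mul _ _ _ _).const_mul _
  have horth : ∀ p q, p ≠ q → ∫ x, g p x * g q x = 0 := fun p q hpq => by
    have hne : p.1 ≠ q.1 ∨ p.2 ≠ q.2 := by
      by_contra! h
      exact hpq (Sigma.ext h.1 (heq_of_eq h.2))
    simp_rw [hg, integral_const_mul, integral_haarBox_mul_of_ne hne, mul_zero]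
  have hdiag : ∀ r ∈ R, ∀ k ∈ boxIdx d r,
      ∫ x, g ⟨r, k⟩ x * g ⟨r, k⟩ x = 1 / 2 ^ ∑ i, r i := fun r hr k hk => by
      simp_rw [hg, integral_const_mul, integral_haarBox_mul_self,
        mul_self_eq_one_iff.2 (hε r hr k hk), one_mul]
  have hsigma : ∀ x, ∑ r ∈ R, ∑ k ∈ boxIdx d r, ε r k * haarBox r k x
      = ∑ p ∈ R.sigma (boxIdx d), g p x := fun x =>
    (sum_sigma R (boxIdx d) fun p => g p x).symm
  simp_rw [hsigma]
  rw [integral_sq_sum_of_orthogonal _ g (fun p _ q _ => hint p q) (fun p _ q _ => horth p q),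
    sum_sigma, card_eq_sum_ones, Nat.cast_sum]
  refine sum_congr rfl fun r hr => ?_
  rw [sum_congr rfl (hdiag r hr), sum_const, card_boxIdx, nsmul_eq_mul]
  push_cast
  field_simp

lemma integral_unitCube_sq_sum_signed_haarBox {d : ℕ} (R : Finset (Fin d → ℕ))
    (ε : (Fin d → ℕ) → (Fin d → ℕ) → ℝ)
    (hε : ∀ r ∈ R, ∀ k ∈ boxIdx d r, ε r k = 1 ∨ ε r k = -1) :
    ∫ x in unitCube d, (∑ r ∈ R, ∑ k ∈ boxIdx d r, ε r k * haarBox r k x) ^ 2 = #R := by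
  have hzero : ∀ x ∉ unitCube d,
      (∑ r ∈ R, ∑ k ∈ boxIdx d r, ε r k * haarBox r k x) ^ 2 = 0 := fun x hx => by
    rw [sum_eq_zero fun r _ => sum_eq_zero fun k hk => by
      rw [haarBox_eq_zero_of_notMem_unitCube hk hx, mul_zero], zero_pow two_ne_zero]
  rw [setIntegral_eq_integral_of_forall_compl_eq_zero hzero,
    integral_sq_sum_signed_haarBox R ε hε]

lemma Nat.choose_add_sub_one_le_mul_pow {n d : ℕ} (hn : 1 ≤ n) :
    (n + d - 1).choose (d - 1) ≤ (d * n) ^ (d - 1) := by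
  rcases Nat.eq_zero_or_pos d with rfl | hd
  · simp
  refine (Nat.choose_le_pow _ _).trans (Nat.pow_le_pow_left ?_ _)
  rw [Nat.sub_le_iff_le_add]
  nlinarith

lemma sqrt_choose_le_rpow {n d : ℕ} (hn : 1 ≤ n) (hd : 1 ≤ d) :
    √((n + d - 1).choose (d - 1) : ℝ)
      ≤ √((d : ℝ) ^ (d - 1)) * (n : ℝ) ^ (((d : ℝ) - 1) / 2) := by
  have hle : ((n + d - 1).choose (d - 1) : ℝ) ≤ (d : ℝ) ^ (d - 1) * (n : ℝ) ^ (d - 1) := by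
    rw [← mul_pow]
    exact_mod_cast Nat.choose_add_sub_one_le_mul_pow hn
  have hsqrt : √((n : ℝ) ^ (d - 1)) = (n : ℝ) ^ (((d : ℝ) - 1) / 2) := by
    rw [Real.sqrt_eq_rpow, ← Real.rpow_natCast, ← Real.rpow_mul n.cast_nonneg, Nat.cast_sub hd]
    ring_nf
  calc √((n + d - 1).choose (d - 1) : ℝ) ≤ √((d : ℝ) ^ (d - 1) * (n : ℝ) ^ (d - 1)) :=
        Real.sqrt_le_sqrt hle
    _ = _ := by rw [Real.sqrt_mul (by positivity), hsqrt]

/-- Roth's orthogonality estimate: the dual function `F = Σ_{|r|=n} f_r` (each `f_r` an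
`r`-function) satisfies `‖F‖₂² = #{r : |r| = n} = C(n+d-1, d-1)`; in particular
`‖F‖₂ ≤ C_d n^{(d-1)/2}`. -/
theorem stmt_10 (d : ℕ) (hd : 2 ≤ d) :
    ∃ C : ℝ, 0 < C ∧ ∀ n : ℕ, 1 ≤ n →
      ∀ (ε : (Fin d → ℕ) → (Fin d → ℕ) → ℝ),
        (∀ r ∈ levIdx d n, ∀ k ∈ boxIdx d r, ε r k = 1 ∨ ε r k = -1) →
        ∀ F : (Fin d → ℝ) → ℝ,
          (∀ x, F x = ∑ r ∈ levIdx d n, ∑ k ∈ boxIdx d r, ε r k * haarBox r k x) →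
          (∫ x in unitCube d, (F x) ^ 2 = ((levIdx d n).card : ℝ)) ∧
          (levIdx d n).card = (n + d - 1).choose (d - 1) ∧
          Real.sqrt (∫ x in unitCube d, (F x) ^ 2)
            ≤ C * (n : ℝ) ^ (((d : ℝ) - 1) / 2) := by
  refine ⟨√((d : ℝ) ^ (d - 1)), by positivity, fun n hn ε hε F hF => ?_⟩
  have hnorm : ∫ x in unitCube d, F x ^ 2 = #(levIdx d n) := by
    simp_rw [hF]
    exact integral_unitCube_sq_sum_signed_haarBox _ ε hε
  have hcard := card_levIdx (by omega : 1 ≤ d) n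
  refine ⟨hnorm, hcard, ?_⟩
  rw [hnorm, hcard]
  exact sqrt_choose_le_rpow hn (by omega)
end
end

section
/- Temlyakov's proof of the two-dimensional Small Ball inequality: for any real coefficients α_R indexed by dyadic rectangles R ⊆ [0,1)² with |R| = 2^{-n}, one has ‖Σ_{|R| = 2^{-n}} α_R h_R‖_∞ ≥ 2^{-n} Σ_{|R| = 2^{-n}} |α_R|. -/
open MeasureTheory Finset

noncomputable section

/-!
All Haar functions involved are constant on the cells of the grid `2^-(n+1) ℕ²`, so it suffices to
work with grid values, where pairings are finite sums. Test `G` against the Riesz product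
`Ψ = ∏_{j ≤ n} (1 + f_j)`, `f_j = Σ_{|R₁| = 2^-j} sign(α_R) h_R`. At each point at most one `h_R`
of a given shape is nonzero, so `|f_j| ≤ 1` and `Ψ ≥ 0`. Expand `Ψ = Σ_S ∏_{j ∈ S} f_j`. Flipping
the binary digit of the first coordinate at scale `2^-(max S + 1)` changes the sign of `f_{max S}`
but of no coarser function, and likewise for the second coordinate at scale `2^-(n + 1 - min S)`.
Hence every term with `S ≠ ∅` sums to zero over the grid, and its pairing with `h_R`,
`|R₁| = 2^-j`, vanishes unless `S = {j}`. So `Σ Ψ = 4^(n+1)` and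
`Σ h_R Ψ = Σ h_R f_j = sign(α_R) 2^(n+2)`, whence `2^(n+2) Σ |α_R| = Σ G Ψ ≤ 4^(n+1) sup |G|`.
-/

namespace SmallBall

lemma xor_two_pow_div_two_pow {t s : ℕ} (h : t < s) (p : ℕ) :
    (p ^^^ 2 ^ t) / 2 ^ s = p / 2 ^ s := by
  apply Nat.eq_of_testBit_eq
  intro i
  simp [Nat.testBit_div_two_pow, Nat.testBit_xor, show t ≠ i + s by omega]

lemma sum_range_two_pow_eq_zero_of_xor {N t : ℕ} (ht : t < N) {F : ℕ → ℝ}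
    (hF : ∀ p, F (p ^^^ 2 ^ t) = -F p) : ∑ p ∈ range (2 ^ N), F p = 0 := by
  refine sum_involution (fun p _ => p ^^^ 2 ^ t) (fun p _ => by rw [hF]; ring) ?_ ?_ ?_
  · intro p _ _ h
    simpa [Nat.testBit_xor] using congrArg (Nat.testBit · t) h
  · intro p hp
    exact mem_range.2 (Nat.xor_lt_two_pow (mem_range.1 hp) (Nat.pow_lt_pow_right one_lt_two ht))
  · intro p _
    simp

lemma card_filter_div_eq {M D k : ℕ} (hD : 0 < D) (h : (k + 1) * D ≤ M) :
    #{p ∈ range M | p / D = k} = D := by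
  have : {p ∈ range M | p / D = k} = Ico (k * D) ((k + 1) * D) := by
    ext p
    simp only [mem_filter, mem_range, mem_Ico, Nat.div_eq_iff hD, add_one_mul] at h ⊢
    omega
  rw [this, Nat.card_Ico, add_one_mul, Nat.add_sub_cancel_left]

def rademacher (t p : ℕ) : ℝ := if p.testBit t then 1 else -1

lemma rademacher_xor_self (t p : ℕ) : rademacher t (p ^^^ 2 ^ t) = -rademacher t p := by
  by_cases h : p.testBit t <;> simp [rademacher, Nat.testBit_xor, h]

lemma rademacher_xor_of_ne {t s : ℕ} (h : t ≠ s) (p : ℕ) :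
    rademacher s (p ^^^ 2 ^ t) = rademacher s p := by
  simp [rademacher, Nat.testBit_xor, h]

lemma abs_rademacher (t p : ℕ) : |rademacher t p| = 1 := by
  unfold rademacher; split <;> norm_num

/-- The Haar function of `[k 2^(s+1), (k+1) 2^(s+1))` on `ℕ`. -/
def gridHaar (s k p : ℕ) : ℝ := if p / 2 ^ (s + 1) = k then rademacher s p else 0

lemma natCast_div_two_pow_mem_dyadI_iff (a b j p : ℕ) :
    (p : ℝ) / 2 ^ (a + b) ∈ dyadI a j ↔ p / 2 ^ b = j := by
  have hsplit : (p : ℝ) / 2 ^ (a + b) = p / 2 ^ b / 2 ^ a := by rw [pow_add, div_div, mul_comm]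
  rw [dyadI, hsplit, Set.mem_Ico, div_le_div_iff_of_pos_right (by positivity),
    div_lt_div_iff_of_pos_right (by positivity), le_div_iff₀ (by positivity),
    div_lt_iff₀ (by positivity), Nat.div_eq_iff (by positivity)]
  have hnat : j * 2 ^ b ≤ p ∧ p < (j + 1) * 2 ^ b ↔ j * 2 ^ b ≤ p ∧ p ≤ j * 2 ^ b + 2 ^ b - 1 := by
    have : 0 < 2 ^ b := by positivity
    rw [add_one_mul]; omega
  rw [← hnat]
  norm_cast

lemma haar_natCast_div_two_pow (m s k p : ℕ) :
    haar m k ((p : ℝ) / 2 ^ (m + 1 + s)) = gridHaar s k p := by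
  classical
  simp only [haar, Pi.sub_apply, Set.indicator_apply, natCast_div_two_pow_mem_dyadI_iff]
  simp only [gridHaar, rademacher, Nat.testBit_eq_decide_div_mod_eq, decide_eq_true_eq, pow_succ,
    ← Nat.div_div_eq_div_mul]
  generalize p / 2 ^ s = d
  split_ifs <;> first | omega | norm_num

lemma gridHaar_xor_self (s k p : ℕ) : gridHaar s k (p ^^^ 2 ^ s) = -gridHaar s k p := by
  simp only [gridHaar, xor_two_pow_div_two_pow (Nat.lt_succ_self s), rademacher_xor_self]
  split_ifs <;> simp

lemma gridHaar_xor_of_lt {t s : ℕ} (h : t < s) (k p : ℕ) :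
    gridHaar s k (p ^^^ 2 ^ t) = gridHaar s k p := by
  simp only [gridHaar, xor_two_pow_div_two_pow (Nat.lt_succ_of_lt h),
    rademacher_xor_of_ne h.ne]

lemma gridHaar_sq (s k p : ℕ) : gridHaar s k p ^ 2 = if p / 2 ^ (s + 1) = k then 1 else 0 := by
  unfold gridHaar; split_ifs <;> simp [← sq_abs, abs_rademacher]

lemma sum_gridHaar_sq {N s k : ℕ} (h : (k + 1) * 2 ^ (s + 1) ≤ 2 ^ N) :
    ∑ p ∈ range (2 ^ N), gridHaar s k p ^ 2 = 2 ^ (s + 1) := by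
  simp only [gridHaar_sq, sum_boole, card_filter_div_eq (by positivity) h]
  push_cast; rfl

lemma prod_eq_neg_prod_of_mem {ι R : Type*} [CommRing R] {s : Finset ι} {f g : ι → R} {a : ι}
    (ha : a ∈ s) (hga : g a = -f a) (hg : ∀ i ∈ s, i ≠ a → g i = f i) :
    ∏ i ∈ s, g i = -∏ i ∈ s, f i := by
  classical
  rw [← mul_prod_erase s g ha, ← mul_prod_erase s f ha, hga,
    prod_congr rfl fun i hi => hg i (mem_of_mem_erase hi) (ne_of_mem_erase hi), neg_mul]

def grid (N : ℕ) : Finset (ℕ × ℕ) := range (2 ^ N) ×ˢ range (2 ^ N)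

lemma sum_grid_eq_zero_of_xor_fst {N t : ℕ} (ht : t < N) {F : ℕ × ℕ → ℝ}
    (hF : ∀ p q, F (p ^^^ 2 ^ t, q) = -F (p, q)) : ∑ x ∈ grid N, F x = 0 := by
  rw [grid, sum_product]
  refine sum_range_two_pow_eq_zero_of_xor ht fun p => ?_
  simp only [hF, sum_neg_distrib]

lemma sum_grid_eq_zero_of_xor_snd {N t : ℕ} (ht : t < N) {F : ℕ × ℕ → ℝ}
    (hF : ∀ p q, F (p, q ^^^ 2 ^ t) = -F (p, q)) : ∑ x ∈ grid N, F x = 0 := by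
  rw [grid, sum_product_right]
  refine sum_range_two_pow_eq_zero_of_xor ht fun q => ?_
  simp only [hF, sum_neg_distrib]

lemma mem_boxIdx_two {a b : ℕ} {k : Fin 2 → ℕ} :
    k ∈ boxIdx 2 ![a, b] ↔ k 0 < 2 ^ a ∧ k 1 < 2 ^ b := by
  simp [boxIdx, Fintype.mem_piFinset, Fin.forall_fin_two]

variable (n : ℕ)

/-- `haarBox ![j, n - j] k` at the point `2^-(n+1) x`. -/
def gridHaarBox (j : ℕ) (k : Fin 2 → ℕ) (x : ℕ × ℕ) : ℝ :=
  gridHaar (n - j) (k 0) x.1 * gridHaar j (k 1) x.2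

/-- The position of the box of level `![j, n - j]` containing the grid point `x`. -/
def gridCell (j : ℕ) (x : ℕ × ℕ) : Fin 2 → ℕ := ![x.1 / 2 ^ (n - j + 1), x.2 / 2 ^ (j + 1)]

lemma gridHaarBox_eq_ite (j : ℕ) (k : Fin 2 → ℕ) (x : ℕ × ℕ) :
    gridHaarBox n j k x =
      if k = gridCell n j x then rademacher (n - j) x.1 * rademacher j x.2 else 0 := by
  have hk : k = gridCell n j x ↔ x.1 / 2 ^ (n - j + 1) = k 0 ∧ x.2 / 2 ^ (j + 1) = k 1 := by
    simp [gridCell, funext_iff, Fin.forall_fin_two, eq_comm]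
  rw [if_congr hk rfl rfl, gridHaarBox, gridHaar, gridHaar]
  split_ifs <;> simp_all

section Flips

variable {n} (j : ℕ) (k : Fin 2 → ℕ) (p q : ℕ)

lemma gridHaarBox_xor_fst_self :
    gridHaarBox n j k (p ^^^ 2 ^ (n - j), q) = -gridHaarBox n j k (p, q) := by
  simp only [gridHaarBox, gridHaar_xor_self, neg_mul]

lemma gridHaarBox_xor_snd_self :
    gridHaarBox n j k (p, q ^^^ 2 ^ j) = -gridHaarBox n j k (p, q) := by
  simp only [gridHaarBox, gridHaar_xor_self, mul_neg]

lemma gridHaarBox_xor_fst_of_lt {t : ℕ} (h : t < n - j) :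
    gridHaarBox n j k (p ^^^ 2 ^ t, q) = gridHaarBox n j k (p, q) := by
  simp only [gridHaarBox, gridHaar_xor_of_lt h]

lemma gridHaarBox_xor_snd_of_lt {t : ℕ} (h : t < j) :
    gridHaarBox n j k (p, q ^^^ 2 ^ t) = gridHaarBox n j k (p, q) := by
  simp only [gridHaarBox, gridHaar_xor_of_lt h]

end Flips

lemma sum_grid_gridHaarBox_sq {j : ℕ} (hj : j ≤ n) {k : Fin 2 → ℕ}
    (hk : k ∈ boxIdx 2 ![j, n - j]) :
    ∑ x ∈ grid (n + 1), gridHaarBox n j k x ^ 2 = 2 ^ (n + 2) := by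
  obtain ⟨hk₀, hk₁⟩ := mem_boxIdx_two.1 hk
  have h₀ : (k 0 + 1) * 2 ^ (n - j + 1) ≤ 2 ^ (n + 1) :=
    (Nat.mul_le_mul_right _ hk₀).trans_eq (by rw [← pow_add]; congr 1; omega)
  have h₁ : (k 1 + 1) * 2 ^ (j + 1) ≤ 2 ^ (n + 1) :=
    (Nat.mul_le_mul_right _ hk₁).trans_eq (by rw [← pow_add]; congr 1; omega)
  rw [grid, sum_product]
  simp only [gridHaarBox, mul_pow, ← mul_sum, ← sum_mul, sum_gridHaar_sq h₀, sum_gridHaar_sq h₁,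
    ← pow_add]
  congr 1; omega

variable (ε : ℕ → (Fin 2 → ℕ) → ℝ)

/-- The paper's `f_(j, n-j)` with signs `ε`, on the grid. -/
def rieszFactor (j : ℕ) (x : ℕ × ℕ) : ℝ :=
  ∑ k ∈ boxIdx 2 ![j, n - j], ε j k * gridHaarBox n j k x

def rieszProduct (x : ℕ × ℕ) : ℝ := ∏ j ∈ range (n + 1), (1 + rieszFactor n ε j x)

lemma rieszFactor_eq_ite (j : ℕ) (x : ℕ × ℕ) :
    rieszFactor n ε j x = if gridCell n j x ∈ boxIdx 2 ![j, n - j] then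
      ε j (gridCell n j x) * (rademacher (n - j) x.1 * rademacher j x.2) else 0 := by
  simp only [rieszFactor, gridHaarBox_eq_ite, mul_ite, mul_zero, sum_ite_eq']

lemma gridHaarBox_mul_rieszFactor {j : ℕ} {k : Fin 2 → ℕ} (hk : k ∈ boxIdx 2 ![j, n - j])
    (x : ℕ × ℕ) : gridHaarBox n j k x * rieszFactor n ε j x = ε j k * gridHaarBox n j k x ^ 2 := by
  rw [gridHaarBox_eq_ite]
  split_ifs with hx
  · subst hx
    rw [rieszFactor_eq_ite, if_pos hk]
    ring
  · simp

lemma rieszProduct_nonneg (hε : ∀ j k, |ε j k| ≤ 1) (x : ℕ × ℕ) : 0 ≤ rieszProduct n ε x := by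
  refine prod_nonneg fun j _ => ?_
  have : |rieszFactor n ε j x| ≤ 1 := by
    rw [rieszFactor_eq_ite]
    split_ifs
    · simpa only [abs_mul, abs_rademacher, mul_one] using hε _ _
    · simp
  linarith [neg_abs_le (rieszFactor n ε j x)]

section Flips

variable {n} (j p q : ℕ)

lemma rieszFactor_xor_fst_self :
    rieszFactor n ε j (p ^^^ 2 ^ (n - j), q) = -rieszFactor n ε j (p, q) := by
  simp only [rieszFactor, gridHaarBox_xor_fst_self, mul_neg, sum_neg_distrib]

lemma rieszFactor_xor_snd_self :
    rieszFactor n ε j (p, q ^^^ 2 ^ j) = -rieszFactor n ε j (p, q) := by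
  simp only [rieszFactor, gridHaarBox_xor_snd_self, mul_neg, sum_neg_distrib]

lemma rieszFactor_xor_fst_of_lt {t : ℕ} (h : t < n - j) :
    rieszFactor n ε j (p ^^^ 2 ^ t, q) = rieszFactor n ε j (p, q) := by
  simp only [rieszFactor, gridHaarBox_xor_fst_of_lt j _ p q h]

lemma rieszFactor_xor_snd_of_lt {t : ℕ} (h : t < j) :
    rieszFactor n ε j (p, q ^^^ 2 ^ t) = rieszFactor n ε j (p, q) := by
  simp only [rieszFactor, gridHaarBox_xor_snd_of_lt j _ p q h]

end Flips

lemma sum_grid_mul_prod_rieszFactor_eq_zero_of_max {S : Finset ℕ} (hS : S.Nonempty)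
    (hSn : S.max' hS ≤ n) {g : ℕ × ℕ → ℝ}
    (hg : ∀ p q, g (p ^^^ 2 ^ (n - S.max' hS), q) = g (p, q)) :
    ∑ x ∈ grid (n + 1), g x * ∏ j ∈ S, rieszFactor n ε j x = 0 := by
  refine sum_grid_eq_zero_of_xor_fst (t := n - S.max' hS) (by omega) fun p q => ?_
  rw [hg, prod_eq_neg_prod_of_mem (f := (rieszFactor n ε · (p, q))) (S.max'_mem hS)
    (rieszFactor_xor_fst_self ε _ p q), mul_neg]
  intro j hj hne
  exact rieszFactor_xor_fst_of_lt ε j p q (by have := S.le_max' j hj; omega)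

lemma sum_grid_mul_prod_rieszFactor_eq_zero_of_min {S : Finset ℕ} (hS : S.Nonempty)
    (hSn : S.min' hS ≤ n) {g : ℕ × ℕ → ℝ}
    (hg : ∀ p q, g (p, q ^^^ 2 ^ S.min' hS) = g (p, q)) :
    ∑ x ∈ grid (n + 1), g x * ∏ j ∈ S, rieszFactor n ε j x = 0 := by
  refine sum_grid_eq_zero_of_xor_snd (t := S.min' hS) (by omega) fun p q => ?_
  rw [hg, prod_eq_neg_prod_of_mem (f := (rieszFactor n ε · (p, q))) (S.min'_mem hS)
    (rieszFactor_xor_snd_self ε _ p q), mul_neg]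
  intro j hj hne
  exact rieszFactor_xor_snd_of_lt ε j p q (lt_of_le_of_ne (S.min'_le j hj) hne.symm)

lemma sum_grid_gridHaarBox_mul_prod_rieszFactor {j : ℕ} (hj : j ≤ n) (k : Fin 2 → ℕ)
    {S : Finset ℕ} (hSn : S ⊆ range (n + 1)) (hS : S ≠ {j}) :
    ∑ x ∈ grid (n + 1), gridHaarBox n j k x * ∏ i ∈ S, rieszFactor n ε i x = 0 := by
  rcases S.eq_empty_or_nonempty with rfl | hS'
  · simp only [prod_empty, mul_one]
    exact sum_grid_eq_zero_of_xor_fst (by omega) (gridHaarBox_xor_fst_self j k)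
  have hmax : S.max' hS' ≤ n := Nat.lt_succ_iff.1 (mem_range.1 (hSn (S.max'_mem hS')))
  by_cases hjmax : j < S.max' hS'
  · exact sum_grid_mul_prod_rieszFactor_eq_zero_of_max n ε hS' hmax fun p q =>
      gridHaarBox_xor_fst_of_lt j k p q (by omega)
  by_cases hjmin : S.min' hS' < j
  · exact sum_grid_mul_prod_rieszFactor_eq_zero_of_min n ε hS' (by omega) fun p q =>
      gridHaarBox_xor_snd_of_lt j k p q hjmin
  refine absurd (eq_singleton_iff_nonempty_unique_mem.2 ⟨hS', fun i hi => ?_⟩) hS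
  have := S.le_max' i hi
  have := S.min'_le i hi
  omega

lemma sum_grid_gridHaarBox_mul_rieszProduct {j : ℕ} (hj : j ≤ n) {k : Fin 2 → ℕ}
    (hk : k ∈ boxIdx 2 ![j, n - j]) :
    ∑ x ∈ grid (n + 1), gridHaarBox n j k x * rieszProduct n ε x = ε j k * 2 ^ (n + 2) := by
  simp only [rieszProduct, prod_one_add, mul_sum]
  rw [sum_comm, sum_eq_single_of_mem {j} (by simpa using hj)]
  · simp only [prod_singleton, gridHaarBox_mul_rieszFactor n ε hk, ← mul_sum,
      sum_grid_gridHaarBox_sq n hj hk]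
  · exact fun S hS hne =>
      sum_grid_gridHaarBox_mul_prod_rieszFactor n ε hj k (mem_powerset.1 hS) hne

lemma sum_grid_rieszProduct :
    ∑ x ∈ grid (n + 1), rieszProduct n ε x = 2 ^ (n + 1) * 2 ^ (n + 1) := by
  simp only [rieszProduct, prod_one_add]
  rw [sum_comm, sum_eq_single_of_mem ∅ (empty_mem_powerset _)]
  · simp [grid]
  · intro S hS hne
    have hS' := nonempty_of_ne_empty hne
    simpa using sum_grid_mul_prod_rieszFactor_eq_zero_of_max n ε hS'
      (Nat.lt_succ_iff.1 (mem_range.1 (mem_powerset.1 hS (S.max'_mem hS')))) (g := 1)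
      fun _ _ => rfl

lemma sum_grid_mul_rieszProduct (α : ℕ → (Fin 2 → ℕ) → ℝ) :
    ∑ x ∈ grid (n + 1), (∑ j ∈ range (n + 1), ∑ k ∈ boxIdx 2 ![j, n - j],
        α j k * gridHaarBox n j k x) * rieszProduct n ε x
      = 2 ^ (n + 2) * ∑ j ∈ range (n + 1), ∑ k ∈ boxIdx 2 ![j, n - j], α j k * ε j k := by
  simp only [sum_mul, mul_sum, mul_assoc]
  rw [sum_comm]
  refine sum_congr rfl fun j hj => ?_
  rw [sum_comm]
  refine sum_congr rfl fun k hk => ?_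
  rw [← mul_sum, sum_grid_gridHaarBox_mul_rieszProduct n ε (by simpa [Nat.lt_succ_iff] using hj) hk]
  ring

theorem sum_abs_le_two_pow_mul_of_abs_le_on_grid (α : ℕ → (Fin 2 → ℕ) → ℝ) {B : ℝ}
    (hB : ∀ x ∈ grid (n + 1),
      |∑ j ∈ range (n + 1), ∑ k ∈ boxIdx 2 ![j, n - j], α j k * gridHaarBox n j k x| ≤ B) :
    ∑ j ∈ range (n + 1), ∑ k ∈ boxIdx 2 ![j, n - j], |α j k| ≤ 2 ^ n * B := by
  set ε : ℕ → (Fin 2 → ℕ) → ℝ := fun j k => SignType.sign (α j k)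
  have hε : ∀ j k, |ε j k| ≤ 1 := fun j k => by
    rcases lt_trichotomy (α j k) 0 with h | h | h <;> simp [ε, h]
  have hpair := sum_grid_mul_rieszProduct n ε α
  simp only [ε, self_mul_sign] at hpair
  have hle := sum_le_sum fun x hx => mul_le_mul_of_nonneg_right
    ((le_abs_self _).trans (hB x hx)) (rieszProduct_nonneg n ε hε x)
  rw [hpair, ← mul_sum, sum_grid_rieszProduct] at hle
  have hpow : (2 : ℝ) ^ (n + 1) * 2 ^ (n + 1) = 2 ^ (n + 2) * 2 ^ n := by
    rw [← pow_add, ← pow_add]; ring_nf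
  rw [hpow] at hle
  exact le_of_mul_le_mul_left (a := (2 : ℝ) ^ (n + 2)) (by linarith) (by positivity)

lemma gridPoint_mem_unitCube {N p q : ℕ} (hp : p < 2 ^ N) (hq : q < 2 ^ N) :
    ![(p : ℝ) / 2 ^ N, (q : ℝ) / 2 ^ N] ∈ unitCube 2 := by
  have hmem : ∀ r : ℕ, r < 2 ^ N → (r : ℝ) / 2 ^ N ∈ Set.Ico (0 : ℝ) 1 := fun r hr =>
    ⟨by positivity, (div_lt_one (by positivity)).2 (by exact_mod_cast hr)⟩
  simp only [unitCube, Set.mem_pi, Set.mem_univ, true_implies, Fin.forall_fin_two,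
    Matrix.cons_val_zero, Matrix.cons_val_one]
  exact ⟨hmem p hp, hmem q hq⟩

lemma haarBox_gridPoint {j : ℕ} (hj : j ≤ n) (k : Fin 2 → ℕ) (p q : ℕ) :
    haarBox ![j, n - j] k ![(p : ℝ) / 2 ^ (n + 1), (q : ℝ) / 2 ^ (n + 1)]
      = gridHaarBox n j k (p, q) := by
  simp only [haarBox, gridHaarBox, Fin.prod_univ_two, Matrix.cons_val_zero, Matrix.cons_val_one]
  rw [← haar_natCast_div_two_pow j (n - j), ← haar_natCast_div_two_pow (n - j) j,
    show j + 1 + (n - j) = n + 1 by omega, show n - j + 1 + j = n + 1 by omega]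

end SmallBall

open SmallBall

/-- Temlyakov's proof of the two-dimensional Small Ball inequality: for any real
coefficients `α_R` over dyadic rectangles `R ⊆ [0,1)²` of area `2^{-n}`,
`‖Σ α_R h_R‖_∞ ≥ 2^{-n} Σ |α_R|`. -/
theorem stmt_15 (n : ℕ) (α : ℕ → (Fin 2 → ℕ) → ℝ) (G : (Fin 2 → ℝ) → ℝ)
    (hG : ∀ x, G x = ∑ j ∈ Finset.range (n + 1),
      ∑ k ∈ boxIdx 2 ![j, n - j], α j k * haarBox ![j, n - j] k x) :
    ∀ B : ℝ, (∀ x ∈ unitCube 2, |G x| ≤ B) →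
      (2 : ℝ) ^ (-(n : ℤ)) *
        ∑ j ∈ Finset.range (n + 1), ∑ k ∈ boxIdx 2 ![j, n - j], |α j k| ≤ B := by
  intro B hB
  rw [zpow_neg, zpow_natCast, inv_mul_le_iff₀ (by positivity)]
  refine sum_abs_le_two_pow_mul_of_abs_le_on_grid n α fun ⟨p, q⟩ hx => ?_
  obtain ⟨hp, hq⟩ := mem_product.1 hx
  have hGx := hG ![(p : ℝ) / 2 ^ (n + 1), (q : ℝ) / 2 ^ (n + 1)]
  rw [sum_congr rfl fun j hj => sum_congr rfl fun k _ => by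
    rw [haarBox_gridPoint n (Nat.lt_succ_iff.1 (mem_range.1 hj))]] at hGx
  exact hGx ▸ hB _ (gridPoint_mem_unitCube (mem_range.1 hp) (mem_range.1 hq))
end
end

section
/- Sidon's theorem for lacunary series (finite form): there is a constant C(λ) such that for any finite lacunary sequence of positive integers n₁ < n₂ < ⋯ < n_N with n_{k+1}/n_k ≥ λ > 2 and any real coefficients c_k, one has sup_x |Σ_{k=1}^N c_k sin(n_k x)| ≥ C(λ) Σ_{k=1}^N |c_k|. -/
open MeasureTheory Finset

noncomputable section

open intervalIntegral
open scoped Real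
open Complex (I)

/-!
Test `f(x) = ∑ c_k sin(n_k x)` against the Riesz product `P = ∏_{k ∈ t} (1 + s_k sin(n_k x))`
with `s_k = sign c_k`, so that `P ≥ 0`. Expanding `P` one factor at a time, the growth
`2 n_k < n_{k+1}` forces `∫₀^{2π} P = 2π` and `∫₀^{2π} sin(n_j x) P(x) dx = π s_j [j ∈ t]`.
For the latter `t` must contain no two consecutive indices: otherwise `n_j` may also arise as
`n_{j+1} - n_j ± ⋯`. Hence `π ∑_{k ∈ t} |c_k| = ∫ f P ≤ 2π sup |f|`, and splitting the indices
by parity gives `C(λ) = 1/4`.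
-/

namespace Sidon

lemma lt_abs_add_and_lt_abs_sub {S m d : ℤ} (h : S < |(|m| - |d|)|) :
    S < |m + d| ∧ S < |m - d| :=
  ⟨h.trans_le (by simpa using abs_abs_sub_abs_le_abs_sub m (-d)),
    h.trans_le (abs_abs_sub_abs_le_abs_sub m d)⟩

structure IsSuperDoubling (n : ℕ → ℕ) : Prop where
  pos_zero : 0 < n 0
  two_mul_lt : ∀ k, 2 * n k < n (k + 1)

namespace IsSuperDoubling

variable {n : ℕ → ℕ}

lemma of_lacunary {lam : ℝ} (hlam : 2 < lam) (hpos : ∀ k, 0 < n k)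
    (hlac : ∀ k, lam * (n k : ℝ) ≤ n (k + 1)) : IsSuperDoubling n where
  pos_zero := hpos 0
  two_mul_lt k := by
    have : (2 : ℝ) * n k < n (k + 1) :=
      (mul_lt_mul_of_pos_right hlam (by exact_mod_cast hpos k)).trans_le (hlac k)
    exact_mod_cast this

lemma sum_range_lt (hn : IsSuperDoubling n) (i : ℕ) : ∑ k ∈ range i, n k < n i := by
  induction i with
  | zero => simpa using hn.pos_zero
  | succ i ih => have := hn.two_mul_lt i; rw [sum_range_succ]; omega

lemma pos (hn : IsSuperDoubling n) (k : ℕ) : 0 < n k :=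
  (Nat.zero_le _).trans_lt (hn.sum_range_lt k)

lemma sum_lt_of_subset_range (hn : IsSuperDoubling n) {t : Finset ℕ} {i : ℕ}
    (ht : t ⊆ range i) : ∑ k ∈ t, n k < n i :=
  (sum_le_sum_of_subset ht).trans_lt (hn.sum_range_lt i)

lemma add_sum_lt (hn : IsSuperDoubling n) {t : Finset ℕ} {j b : ℕ} (hj : j ≤ b)
    (ht : t ⊆ range b) : n j + ∑ k ∈ t, n k < n (b + 1) := by
  have hmono : Monotone n := monotone_nat_of_le_succ fun k => by
    have := hn.two_mul_lt k; omega
  have := hmono hj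
  have := hn.sum_lt_of_subset_range ht
  have := hn.two_mul_lt b
  omega

end IsSuperDoubling

section RieszProduct

variable (n : ℕ → ℕ) (s : ℕ → ℝ)

def rieszProduct (t : Finset ℕ) (x : ℝ) : ℝ := ∏ k ∈ t, (1 + s k * Real.sin (n k * x))

def rieszCoeff (t : Finset ℕ) (m : ℤ) : ℂ :=
  ∫ x in (0 : ℝ)..2 * π, Complex.exp (m * x * I) * rieszProduct n s t x

@[fun_prop]
lemma continuous_rieszProduct (t : Finset ℕ) : Continuous (rieszProduct n s t) := by
  unfold rieszProduct
  fun_prop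

lemma rieszProduct_nonneg (hs : ∀ k, |s k| ≤ 1) (t : Finset ℕ) (x : ℝ) :
    0 ≤ rieszProduct n s t x := by
  refine prod_nonneg fun k _ => ?_
  have : |s k * Real.sin (n k * x)| ≤ 1 := by
    rw [abs_mul]
    exact mul_le_one₀ (hs k) (abs_nonneg _) (Real.abs_sin_le_one _)
  linarith [neg_abs_le (s k * Real.sin (n k * x))]

lemma intervalIntegrable_exp_mul_rieszProduct (t : Finset ℕ) (m : ℤ) :
    IntervalIntegrable (fun x : ℝ => Complex.exp (m * x * I) * rieszProduct n s t x)
      volume 0 (2 * π) :=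
  Continuous.intervalIntegrable (by fun_prop) _ _

lemma rieszCoeff_empty (m : ℤ) : rieszCoeff n s ∅ m = if m = 0 then 2 * π else 0 := by
  simp only [rieszCoeff, rieszProduct, prod_empty, Complex.ofReal_one, mul_one]
  split_ifs with hm
  · simp [hm]
  have hmI : (m * I : ℂ) ≠ 0 := by simp [hm, Complex.I_ne_zero]
  have hperiod : Complex.exp (m * I * (2 * π)) = 1 := by
    rw [show (m * I * (2 * π) : ℂ) = m * (2 * π * I) by ring]
    exact Complex.exp_int_mul_two_pi_mul_I m
  simp_rw [mul_right_comm _ _ I]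
  rw [integral_exp_mul_complex hmI]
  push_cast
  simp [hperiod]

lemma exp_mul_one_add_sin (m : ℤ) (ν : ℕ) (σ x : ℝ) :
    Complex.exp (m * x * I) * (1 + σ * Real.sin (ν * x) : ℝ)
      = Complex.exp (m * x * I) + σ / (2 * I) *
        (Complex.exp (↑(m + ν) * x * I) - Complex.exp (↑(m - ν) * x * I)) := by
  have h2I : (2 * I) ≠ 0 := by simp [Complex.I_ne_zero]
  have hsin (y : ℂ) : Complex.sin y
      = (Complex.exp (y * I) - (Complex.exp (y * I))⁻¹) / (2 * I) := by
    rw [eq_div_iff h2I, ← Complex.exp_neg, ← neg_mul]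
    linear_combination I * Complex.two_sin y
      + (Complex.exp (-y * I) - Complex.exp (y * I)) * Complex.I_sq
  push_cast
  rw [hsin]
  simp only [add_mul, sub_mul, Complex.exp_add, Complex.exp_sub]
  field_simp

lemma rieszCoeff_insert {t : Finset ℕ} {a : ℕ} (ha : a ∉ t) (m : ℤ) :
    rieszCoeff n s (insert a t) m = rieszCoeff n s t m
      + s a / (2 * I) * (rieszCoeff n s t (m + n a) - rieszCoeff n s t (m - n a)) := by
  have hint := intervalIntegrable_exp_mul_rieszProduct n s t
  have hprod (x : ℝ) : rieszProduct n s (insert a t) x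
      = (1 + s a * Real.sin (n a * x)) * rieszProduct n s t x := prod_insert ha
  simp only [rieszCoeff, hprod, Complex.ofReal_mul, ← mul_assoc, exp_mul_one_add_sin]
  rw [← integral_sub (hint _) (hint _), ← intervalIntegral.integral_const_mul,
    ← integral_add (hint _) (((hint _).sub (hint _)).const_mul _)]
  congr 1 with x
  ring

lemma rieszCoeff_eq_zero_of_sum_lt {t : Finset ℕ} {m : ℤ}
    (hm : ∑ k ∈ t, (n k : ℤ) < |m|) :
    rieszCoeff n s t m = 0 := by
  induction t using Finset.induction_on generalizing m with
  | empty =>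
    have hm0 : m ≠ 0 := by rintro rfl; simp at hm
    simp [rieszCoeff_empty, hm0]
  | insert a t ha ih =>
    rw [sum_insert ha] at hm
    obtain ⟨hplus, hminus⟩ := lt_abs_add_and_lt_abs_sub (S := ∑ k ∈ t, (n k : ℤ)) (m := m)
      (d := n a) (by rw [Nat.abs_cast]; exact lt_abs.mpr (Or.inl (by omega)))
    rw [rieszCoeff_insert n s ha, ih (by omega), ih hplus, ih hminus]
    simp

lemma rieszCoeff_insert_of_lt {t : Finset ℕ} {a : ℕ} (ha : a ∉ t) {m : ℤ}
    (hm : |m| + ∑ k ∈ t, (n k : ℤ) < n a) :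
    rieszCoeff n s (insert a t) m = rieszCoeff n s t m := by
  obtain ⟨hplus, hminus⟩ := lt_abs_add_and_lt_abs_sub (S := ∑ k ∈ t, (n k : ℤ)) (m := m)
    (d := n a) (by rw [Nat.abs_cast]; exact lt_abs.mpr (Or.inr (by omega)))
  simp [rieszCoeff_insert n s ha, rieszCoeff_eq_zero_of_sum_lt n s hplus,
    rieszCoeff_eq_zero_of_sum_lt n s hminus]

lemma rieszCoeff_zero (hn : IsSuperDoubling n) (t : Finset ℕ) : rieszCoeff n s t 0 = 2 * π := by
  induction t using Finset.induction_on_max with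
  | empty => simp [rieszCoeff_empty]
  | insert a u hu ih =>
    have hsum : ∑ k ∈ u, n k < n a :=
      hn.sum_lt_of_subset_range fun k hk => mem_range.2 (hu k hk)
    rw [rieszCoeff_insert_of_lt n s (fun h => (hu a h).false) (by simp; exact_mod_cast hsum), ih]

lemma rieszCoeff_natCast (hn : IsSuperDoubling n) {t : Finset ℕ} (ht : ∀ k ∈ t, k + 1 ∉ t)
    (j : ℕ) : rieszCoeff n s t (n j) = if j ∈ t then π * I * s j else 0 := by
  induction t using Finset.induction_on_max with
  | empty => simp [rieszCoeff_empty, (hn.pos j).ne']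
  | insert a u hu ih =>
    have hau : a ∉ u := fun h => (hu a h).false
    have hur : u ⊆ range a := fun k hk => mem_range.2 (hu k hk)
    rcases lt_trichotomy j a with hja | rfl | haj
    · obtain ⟨b, rfl⟩ : ∃ b, a = b + 1 := ⟨a - 1, by omega⟩
      have hub : u ⊆ range b := fun k hk => by
        have : k ≠ b := by rintro rfl; exact ht k (mem_insert_of_mem hk) (mem_insert_self _ _)
        have := mem_range.1 (hur hk); exact mem_range.2 (by omega)
      have hlt := hn.add_sum_lt (by omega : j ≤ b) hub
      rw [rieszCoeff_insert_of_lt n s hau (by rw [Nat.abs_cast]; exact_mod_cast hlt),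
        ih fun k hk hk1 => ht k (mem_insert_of_mem hk) (mem_insert_of_mem hk1)]
      simp [hja.ne]
    · have hsum : ∑ k ∈ u, (n k : ℤ) < n j := by exact_mod_cast hn.sum_lt_of_subset_range hur
      rw [rieszCoeff_insert n s hau, sub_self, rieszCoeff_zero n s hn,
        rieszCoeff_eq_zero_of_sum_lt n s (m := n j) (by rwa [Nat.abs_cast]),
        rieszCoeff_eq_zero_of_sum_lt n s (m := n j + n j)
          (by rw [abs_of_nonneg (by positivity)]; omega),
        if_pos (mem_insert_self _ _)]
      field_simp
      simp only [Complex.I_sq]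
      ring
    · have hsub : insert a u ⊆ range j := by
        intro k hk
        rcases mem_insert.1 hk with rfl | hk
        exacts [mem_range.2 haj, mem_range.2 ((hu k hk).trans haj)]
      have hsum : ∑ k ∈ insert a u, (n k : ℤ) < n j := by
        exact_mod_cast hn.sum_lt_of_subset_range hsub
      rw [rieszCoeff_eq_zero_of_sum_lt n s (by rwa [Nat.abs_cast]),
        if_neg fun h => (mem_range.1 (hsub h)).false]

lemma re_rieszCoeff (t : Finset ℕ) (m : ℤ) :
    (rieszCoeff n s t m).re
      = ∫ x in (0 : ℝ)..2 * π, Real.cos (m * x) * rieszProduct n s t x := by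
  rw [rieszCoeff, ← RCLike.re_to_complex,
    ← intervalIntegral_re (intervalIntegrable_exp_mul_rieszProduct n s t m)]
  congr 1 with x
  rw [RCLike.re_to_complex, ← Complex.ofReal_intCast, ← Complex.ofReal_mul,
    Complex.re_mul_ofReal,
    Complex.exp_ofReal_mul_I_re]

lemma im_rieszCoeff (t : Finset ℕ) (m : ℤ) :
    (rieszCoeff n s t m).im
      = ∫ x in (0 : ℝ)..2 * π, Real.sin (m * x) * rieszProduct n s t x := by
  rw [rieszCoeff, ← RCLike.im_to_complex,
    ← intervalIntegral_im (intervalIntegrable_exp_mul_rieszProduct n s t m)]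
  congr 1 with x
  rw [RCLike.im_to_complex, ← Complex.ofReal_intCast, ← Complex.ofReal_mul,
    Complex.im_mul_ofReal,
    Complex.exp_ofReal_mul_I_im]

lemma integral_rieszProduct (hn : IsSuperDoubling n) (t : Finset ℕ) :
    ∫ x in (0 : ℝ)..2 * π, rieszProduct n s t x = 2 * π := by
  simpa [rieszCoeff_zero n s hn] using (re_rieszCoeff n s t 0).symm

lemma integral_sin_mul_rieszProduct (hn : IsSuperDoubling n) {t : Finset ℕ}
    (ht : ∀ k ∈ t, k + 1 ∉ t) (j : ℕ) :
    ∫ x in (0 : ℝ)..2 * π, Real.sin (n j * x) * rieszProduct n s t x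
      = if j ∈ t then π * s j else 0 := by
  have := im_rieszCoeff n s t (n j)
  rw [rieszCoeff_natCast n s hn ht] at this
  push_cast at this
  rw [← this]
  split_ifs <;> simp

end RieszProduct

theorem sum_abs_le_two_mul_of_abs_le {n : ℕ → ℕ} (hn : IsSuperDoubling n) {t : Finset ℕ}
    (ht : ∀ k ∈ t, k + 1 ∉ t) {N : ℕ} (htN : t ⊆ range N) {c : ℕ → ℝ} {B : ℝ}
    (hB : ∀ x : ℝ, |∑ k ∈ range N, c k * Real.sin (n k * x)| ≤ B) :
    ∑ k ∈ t, |c k| ≤ 2 * B := by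
  set s : ℕ → ℝ := fun k => SignType.sign (c k)
  have hs (k : ℕ) : |s k| ≤ 1 := by
    simp only [s]
    rcases SignType.sign (c k) with _ | _ | _ <;> simp
  set f := fun x : ℝ => ∑ k ∈ range N, c k * Real.sin (n k * x)
  have hpair :
      ∫ x in (0 : ℝ)..2 * π, f x * rieszProduct n s t x = π * ∑ k ∈ t, |c k| := by
    simp only [f, sum_mul, mul_assoc]
    rw [integral_finsetSum fun k _ => Continuous.intervalIntegrable (by fun_prop) _ _]
    simp only [intervalIntegral.integral_const_mul, integral_sin_mul_rieszProduct n s hn ht,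
      mul_ite, mul_zero, sum_ite_mem, inter_eq_right.2 htN, mul_sum]
    exact sum_congr rfl fun k _ => by rw [mul_left_comm, self_mul_sign]
  have hle : ∫ x in (0 : ℝ)..2 * π, f x * rieszProduct n s t x
      ≤ ∫ x in (0 : ℝ)..2 * π, B * rieszProduct n s t x :=
    integral_mono_on (by positivity) (Continuous.intervalIntegrable (by fun_prop) _ _)
      (Continuous.intervalIntegrable (by fun_prop) _ _) fun x _ =>
      mul_le_mul_of_nonneg_right ((le_abs_self _).trans (hB x)) (rieszProduct_nonneg n s hs t x)
  rw [hpair, intervalIntegral.integral_const_mul, integral_rieszProduct n s hn] at hle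
  nlinarith [Real.pi_pos]

end Sidon

/-- Sidon's theorem for lacunary series (finite form): for every `λ > 2` there is a
constant `C(λ) > 0` such that for any finite lacunary sequence of positive integers with
`n_{k+1} ≥ λ n_k` and any real coefficients `c_k`,
`sup_x |Σ_{k<N} c_k sin(n_k x)| ≥ C(λ) Σ_{k<N} |c_k|`. -/
theorem stmt_16 (lam : ℝ) (hlam : 2 < lam) :
    ∃ C : ℝ, 0 < C ∧ ∀ (N : ℕ) (n : ℕ → ℕ) (c : ℕ → ℝ),
      (∀ k, 0 < n k) → (∀ k, lam * (n k : ℝ) ≤ (n (k + 1) : ℝ)) →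
      ∀ B : ℝ, (∀ x : ℝ, |∑ k ∈ Finset.range N, c k * Real.sin ((n k : ℝ) * x)| ≤ B) →
        C * ∑ k ∈ Finset.range N, |c k| ≤ B := by
  refine ⟨1 / 4, by norm_num, fun N n c hpos hlac B hB => ?_⟩
  have hn := Sidon.IsSuperDoubling.of_lacunary hlam hpos hlac
  have heven := Sidon.sum_abs_le_two_mul_of_abs_le hn (t := (range N).filter Even)
    (fun k hk hk1 => by simp_all [Nat.even_add_one]) (filter_subset _ _) hB
  have hodd := Sidon.sum_abs_le_two_mul_of_abs_le hn (t := (range N).filter (¬Even ·))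
    (fun k hk hk1 => by simp_all [Nat.odd_add_one]) (filter_subset _ _) hB
  rw [← sum_filter_add_sum_filter_not (range N) Even]
  linarith
end
end
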